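/- arXiv:1808.06191 — 3 statements merged into one kernel-verified Lean document; each statement's English description precedes it below -/
import Mathlib

section
/- Let g ∈ S(R^k) and let w_1,...,w_k ∈ R^n be orthonormal vectors, completed to an orthonormal basis w_1,...,w_n of R^n. Let l(x) = g(w_1^T x,...,w_k^T x). Then the Fourier transform of the tempered distribution T_l equals (2π)^{(n−k)/2} F[g](Q_1^T ξ) · δ^{n−k}(Q_2^T ξ), where Q_1 = [w_1,...,w_k], Q_2 = [w_{k+1},...,w_n], and δ^{n−k} is the (n−k)-fold product of Dirac deltas; in particular, F[T_l] is supported in the k-dimensional subspace span(w_1,...,w_k). -/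
/-!
Write the ridge function by Fourier inversion of `g`: with `Q₁ a = ∑ aᵢ wᵢ`,
`l x = (2π)^{-k} ∫ F̂g(a) e^{i⟨Q₁ a, x⟩} da`, where `F̂` is the unnormalised transform with kernel
`e^{-i⟨ξ, x⟩}`. Tested against `F̂φ`, the integrand `F̂g(a) e^{i⟨Q₁ a, x⟩} F̂φ(x)` is absolutely
integrable on `ℝᵏ × ℝⁿ`, so Fubini applies, and Fourier inversion of `φ` on `ℝⁿ` turns the inner
`x`-integral into `(2π)ⁿ φ(Q₁ a)`.
-/

open MeasureTheory

/-- The Fourier normalization constant `(2π)^(-n/2)` as a complex number. -/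
noncomputable def fourierConst (n : ℕ) : ℂ :=
  ((Real.rpow (2 * Real.pi) (-(n : ℝ) / 2)) : ℝ)

open Real Complex Module FourierTransform
open scoped RealInnerProductSpace SchwartzMap

section AngularFourier

variable {V : Type*} [NormedAddCommGroup V] [InnerProductSpace ℝ V] [FiniteDimensional ℝ V]
  [MeasurableSpace V] [BorelSpace V]

noncomputable def angularFourier (f : V → ℂ) (ξ : V) : ℂ :=
  ∫ z, f z * cexp (-I * ((⟪ξ, z⟫ : ℝ) : ℂ))

lemma angularFourier_eq_fourier (f : V → ℂ) (ξ : V) :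
    angularFourier f ξ = 𝓕 f ((2 * π)⁻¹ • ξ) := by
  rw [angularFourier, Real.fourier_eq']
  congr 1 with z
  rw [smul_eq_mul, mul_comm, real_inner_smul_right, real_inner_comm]
  congr 2
  push_cast
  field_simp

lemma integral_mul_exp_inner_eq_fourierInv (f : V → ℂ) (ξ : V) :
    ∫ z, f z * cexp (I * ((⟪ξ, z⟫ : ℝ) : ℂ)) = 𝓕⁻ f ((2 * π)⁻¹ • ξ) := by
  rw [Real.fourierInv_eq']
  congr 1 with z
  rw [smul_eq_mul, mul_comm, real_inner_smul_right, real_inner_comm]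
  congr 2
  push_cast
  field_simp

lemma integrable_angularFourier (f : 𝓢(V, ℂ)) : Integrable (angularFourier (f : V → ℂ)) := by
  simp_rw [funext (angularFourier_eq_fourier (f : V → ℂ)), ← SchwartzMap.fourier_coe]
  exact (𝓕 f).integrable.comp_smul (by positivity)

lemma integral_angularFourier_mul_exp_inner (f : 𝓢(V, ℂ)) (ξ : V) :
    ∫ x, angularFourier f x * cexp (I * ((⟪ξ, x⟫ : ℝ) : ℂ)) =
      (2 * π : ℂ) ^ finrank ℝ V * f ξ := by
  have h2π : (2 * π) ≠ 0 := by positivity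
  have hrescale : ∀ x : V, ⟪ξ, x⟫ = ⟪(2 * π) • ξ, (2 * π)⁻¹ • x⟫ := fun x => by
    rw [real_inner_smul_left, real_inner_smul_right, ← mul_assoc, mul_inv_cancel₀ h2π, one_mul]
  simp_rw [angularFourier_eq_fourier, hrescale, ← SchwartzMap.fourier_coe]
  rw [Measure.integral_comp_inv_smul_of_nonneg volume
    (fun u => 𝓕 f u * cexp (I * ((⟪(2 * π) • ξ, u⟫ : ℝ) : ℂ))) (by positivity),
    integral_mul_exp_inner_eq_fourierInv, inv_smul_smul₀ h2π, ← SchwartzMap.fourierInv_coe,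
    fourierInv_fourier_eq, Complex.real_smul]
  push_cast
  rfl

variable {E : Type*} [NormedAddCommGroup E] [InnerProductSpace ℝ E] [FiniteDimensional ℝ E]
  [MeasurableSpace E] [BorelSpace E]

theorem integral_ridge_mul_angularFourier (g : 𝓢(E, ℂ)) (φ : 𝓢(V, ℂ)) (Q : E → V)
    (hQ : Continuous Q) (P : V → E) (hPQ : ∀ a x, ⟪a, P x⟫ = ⟪Q a, x⟫) :
    ∫ x, g (P x) * angularFourier φ x =
      (((2 * π) ^ finrank ℝ V / (2 * π) ^ finrank ℝ E : ℝ) : ℂ) *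
        ∫ a, angularFourier g a * φ (Q a) := by
  have hg : ∀ x, g (P x) =
      ((2 * π : ℂ) ^ finrank ℝ E)⁻¹ *
        ∫ a, angularFourier g a * cexp (I * ((⟪Q a, x⟫ : ℝ) : ℂ)) := by
    intro x
    have h := integral_angularFourier_mul_exp_inner g (P x)
    simp_rw [← real_inner_comm (P x), hPQ] at h
    rw [h, inv_mul_cancel_left₀ (pow_ne_zero _ (by exact_mod_cast two_pi_pos.ne'))]
  have hint : Integrable (Function.uncurry fun x a =>
      angularFourier g a * cexp (I * ((⟪Q a, x⟫ : ℝ) : ℂ)) * angularFourier φ x)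
      (volume.prod volume) := by
    refine ((integrable_angularFourier φ).norm.mul_prod (integrable_angularFourier g).norm).mono'
      ?_ (ae_of_all _ fun ⟨x, a⟩ => ?_)
    · have hexp : Continuous fun p : V × E => cexp (I * ((⟪Q p.2, p.1⟫ : ℝ) : ℂ)) := by fun_prop
      exact ((integrable_angularFourier g).aestronglyMeasurable.comp_snd.mul
        hexp.aestronglyMeasurable).mul (integrable_angularFourier φ).aestronglyMeasurable.comp_fst
    · simp only [Function.uncurry_apply_pair, norm_mul, mul_comm I, norm_exp_ofReal_mul_I]
      rw [mul_one, mul_comm]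
  calc ∫ x, g (P x) * angularFourier φ x
      = ((2 * π : ℂ) ^ finrank ℝ E)⁻¹ * ∫ x, ∫ a,
          angularFourier g a * cexp (I * ((⟪Q a, x⟫ : ℝ) : ℂ)) * angularFourier φ x := by
        rw [← integral_const_mul]
        congr 1 with x
        rw [hg, mul_assoc, integral_mul_const]
    _ = ((2 * π : ℂ) ^ finrank ℝ E)⁻¹ * ∫ a, ∫ x,
          angularFourier g a * cexp (I * ((⟪Q a, x⟫ : ℝ) : ℂ)) * angularFourier φ x := by
        rw [integral_integral_swap hint]
    _ = ((2 * π : ℂ) ^ finrank ℝ E)⁻¹ * ∫ a,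
          angularFourier g a * ((2 * π : ℂ) ^ finrank ℝ V * φ (Q a)) := by
        congr 2 with a
        simp_rw [mul_assoc, integral_const_mul, mul_comm (cexp _),
          integral_angularFourier_mul_exp_inner]
    _ = _ := by
        simp_rw [mul_left_comm _ ((2 * π : ℂ) ^ finrank ℝ V), integral_const_mul]
        push_cast
        ring

end AngularFourier

lemma fourierConst_mul_pow_div_pow (n k : ℕ) :
    fourierConst n * (((2 * π) ^ n / (2 * π) ^ k : ℝ) : ℂ) =
      ((Real.rpow (2 * π) (((n : ℝ) - k) / 2) : ℝ) : ℂ) * fourierConst k := by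
  simp only [fourierConst, ← ofReal_mul, Real.rpow_eq_pow]
  congr 1
  rw [← Real.rpow_natCast, ← Real.rpow_natCast, ← Real.rpow_sub two_pi_pos,
    ← Real.rpow_add two_pi_pos, ← Real.rpow_add two_pi_pos]
  ring_nf

theorem fourier_transform_of_ridge_function_general (n k : ℕ) (hkn : k ≤ n)
    (w : Fin n → EuclideanSpace ℝ (Fin n))
    (g : SchwartzMap (EuclideanSpace ℝ (Fin k)) ℂ)
    (l : EuclideanSpace ℝ (Fin n) → ℂ)
    (hl : ∀ x, l x = g ((EuclideanSpace.equiv (Fin k) ℝ).symm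
      (fun i : Fin k => inner ℝ (w (Fin.castLE hkn i)) x)))
    (Fg : EuclideanSpace ℝ (Fin k) → ℂ)
    (hFg : ∀ y, Fg y = fourierConst k *
      ∫ z, g z * Complex.exp (-Complex.I * ((inner ℝ y z : ℝ) : ℂ)))
    (Fφ : SchwartzMap (EuclideanSpace ℝ (Fin n)) ℂ → EuclideanSpace ℝ (Fin n) → ℂ)
    (hFφ : ∀ φ ξ, Fφ φ ξ = fourierConst n *
      ∫ z, φ z * Complex.exp (-Complex.I * ((inner ℝ ξ z : ℝ) : ℂ))) :
    ∀ φ : SchwartzMap (EuclideanSpace ℝ (Fin n)) ℂ,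
      (∫ x, l x * Fφ φ x) =
        ((Real.rpow (2 * Real.pi) (((n : ℝ) - (k : ℝ)) / 2)) : ℂ) *
          ∫ y : EuclideanSpace ℝ (Fin k),
            Fg y * φ (∑ i : Fin k, y i • w (Fin.castLE hkn i)) := by
  intro φ
  have hPQ : ∀ (a : EuclideanSpace ℝ (Fin k)) x,
      ⟪a, (EuclideanSpace.equiv (Fin k) ℝ).symm (fun i => ⟪w (Fin.castLE hkn i), x⟫)⟫ =
        ⟪∑ i, a i • w (Fin.castLE hkn i), x⟫ := by
    intro a x
    rw [sum_inner, PiLp.inner_apply]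
    refine Finset.sum_congr rfl fun i _ => ?_
    simp [real_inner_smul_left, mul_comm]
  have hFφ' : Fφ φ = fun ξ => fourierConst n * angularFourier φ ξ := funext (hFφ φ)
  have hFg' : Fg = fun y => fourierConst k * angularFourier g y := funext hFg
  calc ∫ x, l x * Fφ φ x
      = fourierConst n * ∫ x, g ((EuclideanSpace.equiv (Fin k) ℝ).symm
          (fun i => ⟪w (Fin.castLE hkn i), x⟫)) * angularFourier φ x := by
        simp_rw [hl, hFφ', mul_left_comm _ (fourierConst n), integral_const_mul]
    _ = _ := by
        rw [integral_ridge_mul_angularFourier g φ _ (by fun_prop) _ hPQ, hFg',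
          finrank_euclideanSpace_fin, finrank_euclideanSpace_fin, ← mul_assoc,
          fourierConst_mul_pow_div_pow, mul_assoc]
        simp_rw [mul_assoc, integral_const_mul]

/-- For `l x = g(w₁ᵀx, …, w_kᵀx)` with `w₁, …, w_n` an orthonormal basis of `ℝⁿ`
(the first `k` of which enter `l`), the Fourier transform of `T_l` is
`(2π)^((n-k)/2) F[g](Q₁ᵀξ) δ^{n-k}(Q₂ᵀξ)`; tested against a Schwartz `φ`, this reads
`T_l(F[φ]) = (2π)^((n-k)/2) ∫_{ℝᵏ} F[g](y) φ(Q₁ y) dy`.  In particular `F[T_l]` is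
supported in `span(w₁, …, w_k)`. -/
theorem fourier_transform_of_ridge_function (n k : ℕ) (hkn : k ≤ n)
    (w : Fin n → EuclideanSpace ℝ (Fin n)) (hw : Orthonormal ℝ w)
    (g : SchwartzMap (EuclideanSpace ℝ (Fin k)) ℂ)
    (l : EuclideanSpace ℝ (Fin n) → ℂ)
    (hl : ∀ x, l x = g ((EuclideanSpace.equiv (Fin k) ℝ).symm
      (fun i : Fin k => inner ℝ (w (Fin.castLE hkn i)) x)))
    (Fg : EuclideanSpace ℝ (Fin k) → ℂ)
    (hFg : ∀ y, Fg y = fourierConst k *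
      ∫ z, g z * Complex.exp (-Complex.I * ((inner ℝ y z : ℝ) : ℂ)))
    (Fφ : SchwartzMap (EuclideanSpace ℝ (Fin n)) ℂ → EuclideanSpace ℝ (Fin n) → ℂ)
    (hFφ : ∀ φ ξ, Fφ φ ξ = fourierConst n *
      ∫ z, φ z * Complex.exp (-Complex.I * ((inner ℝ ξ z : ℝ) : ℂ))) :
    ∀ φ : SchwartzMap (EuclideanSpace ℝ (Fin n)) ℂ,
      (∫ x, l x * Fφ φ x) =
        ((Real.rpow (2 * Real.pi) (((n : ℝ) - (k : ℝ)) / 2)) : ℂ) *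
          ∫ y : EuclideanSpace ℝ (Fin k),
            Fg y * φ (∑ i : Fin k, y i • w (Fin.castLE hkn i)) :=
  fourier_transform_of_ridge_function_general n k hkn w g l hl Fg hFg Fφ hFφ
end

section
/- Let T ∈ S'(R^n) be the tempered distribution acting by T(φ) = ∫_{R^k} r(y) φ(A_1 y) dy, where r ∈ S(R^k), A_1 = [a_1,...,a_k] has orthonormal columns completed to an orthonormal basis a_1,...,a_n of R^n. Then the inverse Fourier transform of T is a function of the form (2π)^{-(n−k)/2} g̃(a_1^T ξ,...,a_k^T ξ) with g̃ = F^{-1}[r] ∈ S(R^k). -/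
/-!
Unfolding `F⁻¹[φ]`, the pairing becomes the double integral of
`r(y) φ(ξ) e^{i⟨A₁y, ξ⟩}`, which is absolutely convergent because the exponential is
unimodular and `r`, `φ` are integrable. After exchanging the integrals (Fubini) and writing
`⟨A₁y, ξ⟩ = ⟨y, A₁ᵀξ⟩`, the inner integral over `y` is `(2π)^{k/2} g̃(A₁ᵀξ)`, and
`(2π)^{-n/2} (2π)^{k/2} = (2π)^{-(n-k)/2}`.
-/

open MeasureTheory

theorem fourierConst_eq_rpow_mul_fourierConst (n k : ℕ) :
    fourierConst n =
      ((Real.rpow (2 * Real.pi) (-((n : ℝ) - (k : ℝ)) / 2)) : ℂ) * fourierConst k := by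
  unfold fourierConst
  rw [← Complex.ofReal_mul, Real.rpow_eq_pow, Real.rpow_eq_pow, Real.rpow_eq_pow,
    ← Real.rpow_add (by positivity)]
  ring_nf

theorem inner_sum_smul_eq_inner_equiv_symm {ι E : Type*} [Fintype ι]
    [NormedAddCommGroup E] [InnerProductSpace ℝ E]
    (v : ι → E) (y : EuclideanSpace ℝ ι) (ξ : E) :
    inner ℝ (∑ i, y i • v i) ξ =
      inner ℝ ((EuclideanSpace.equiv ι ℝ).symm fun i => inner ℝ (v i) ξ) y := by
  simp [sum_inner, real_inner_smul_left, PiLp.inner_apply, mul_comm]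

theorem integral_mul_integral_mul_exp_swap {α β : Type*} [MeasurableSpace α]
    [MeasurableSpace β] {μ : Measure α} {ν : Measure β} [SFinite μ] [SFinite ν]
    {r : α → ℂ} {φ : β → ℂ} (hr : Integrable r μ) (hφ : Integrable φ ν)
    {B : α → β → ℝ} (hB : Measurable (Function.uncurry B)) :
    ∫ y, r y * ∫ ξ, φ ξ * Complex.exp (Complex.I * B y ξ) ∂ν ∂μ =
      ∫ ξ, (∫ y, r y * Complex.exp (Complex.I * B y ξ) ∂μ) * φ ξ ∂ν := by
  have hint : Integrable (Function.uncurry fun y ξ =>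
      Complex.exp (Complex.I * B y ξ) * (r y * φ ξ)) (μ.prod ν) := by
    refine (hr.mul_prod hφ).bdd_mul (c := 1) ?_ (ae_of_all _ fun p => ?_)
    · exact (by fun_prop : Measurable fun p : α × β =>
        Complex.exp (Complex.I * Function.uncurry B p)).aestronglyMeasurable
    · simp [Complex.norm_exp]
  calc ∫ y, r y * ∫ ξ, φ ξ * Complex.exp (Complex.I * B y ξ) ∂ν ∂μ
      = ∫ y, ∫ ξ, Complex.exp (Complex.I * B y ξ) * (r y * φ ξ) ∂ν ∂μ := by
        congr 1 with y; rw [← integral_const_mul]; congr 1 with ξ; ring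
    _ = ∫ ξ, ∫ y, Complex.exp (Complex.I * B y ξ) * (r y * φ ξ) ∂μ ∂ν :=
        integral_integral_swap hint
    _ = ∫ ξ, (∫ y, r y * Complex.exp (Complex.I * B y ξ) ∂μ) * φ ξ ∂ν := by
        congr 1 with ξ; rw [← integral_mul_const]; congr 1 with y; ring

theorem inverse_fourier_of_subspace_distribution_general (n k : ℕ) (hkn : k ≤ n)
    (a : Fin n → EuclideanSpace ℝ (Fin n))
    (r : SchwartzMap (EuclideanSpace ℝ (Fin k)) ℂ)
    (gt : EuclideanSpace ℝ (Fin k) → ℂ)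
    (hgt : ∀ y, gt y = fourierConst k *
      ∫ z, r z * Complex.exp (Complex.I * ((inner ℝ y z : ℝ) : ℂ)))
    (Finvφ : SchwartzMap (EuclideanSpace ℝ (Fin n)) ℂ → EuclideanSpace ℝ (Fin n) → ℂ)
    (hFinvφ : ∀ φ x, Finvφ φ x = fourierConst n *
      ∫ ξ, φ ξ * Complex.exp (Complex.I * ((inner ℝ x ξ : ℝ) : ℂ))) :
    ∀ φ : SchwartzMap (EuclideanSpace ℝ (Fin n)) ℂ,
      (∫ y : EuclideanSpace ℝ (Fin k),
          r y * Finvφ φ (∑ i : Fin k, y i • a (Fin.castLE hkn i))) =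
        ∫ ξ : EuclideanSpace ℝ (Fin n),
          ((Real.rpow (2 * Real.pi) (-((n : ℝ) - (k : ℝ)) / 2)) : ℂ) *
            gt ((EuclideanSpace.equiv (Fin k) ℝ).symm
              (fun i : Fin k => inner ℝ (a (Fin.castLE hkn i)) ξ)) * φ ξ := by
  intro φ
  have hB : Measurable (Function.uncurry fun (y : EuclideanSpace ℝ (Fin k)) ξ =>
      inner ℝ (∑ i : Fin k, y i • a (Fin.castLE hkn i)) ξ) := by fun_prop
  calc (∫ y, r y * Finvφ φ (∑ i : Fin k, y i • a (Fin.castLE hkn i)))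
      = fourierConst n * ∫ y, r y * ∫ ξ, φ ξ * Complex.exp (Complex.I *
          ((inner ℝ (∑ i : Fin k, y i • a (Fin.castLE hkn i)) ξ : ℝ) : ℂ)) := by
        rw [← integral_const_mul]; congr 1 with y; rw [hFinvφ]; ring
    _ = fourierConst n * ∫ ξ, (∫ y, r y * Complex.exp (Complex.I *
          ((inner ℝ (∑ i : Fin k, y i • a (Fin.castLE hkn i)) ξ : ℝ) : ℂ))) * φ ξ := by
        rw [integral_mul_integral_mul_exp_swap r.integrable φ.integrable hB]
    _ = _ := by
        rw [← integral_const_mul]; congr 1 with ξ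
        rw [hgt, fourierConst_eq_rpow_mul_fourierConst n k]
        simp only [inner_sum_smul_eq_inner_equiv_symm]
        ring

/-- Let `T ∈ S'(ℝⁿ)` act by `T(φ) = ∫_{ℝᵏ} r(y) φ(A₁ y) dy` with `r ∈ S(ℝᵏ)` and
`a₁, …, a_n` an orthonormal basis whose first `k` vectors form `A₁`.  Then the inverse
Fourier transform of `T` is the function
`ξ ↦ (2π)^(-(n-k)/2) g̃(a₁ᵀξ, …, a_kᵀξ)` with `g̃ = F⁻¹[r]`; tested against a Schwartz
`φ`, this reads `T(F⁻¹[φ]) = ∫ (2π)^(-(n-k)/2) g̃(a₁ᵀξ, …, a_kᵀξ) φ(ξ) dξ`. -/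
theorem inverse_fourier_of_subspace_distribution (n k : ℕ) (hkn : k ≤ n)
    (a : Fin n → EuclideanSpace ℝ (Fin n)) (ha : Orthonormal ℝ a)
    (r : SchwartzMap (EuclideanSpace ℝ (Fin k)) ℂ)
    (gt : EuclideanSpace ℝ (Fin k) → ℂ)
    (hgt : ∀ y, gt y = fourierConst k *
      ∫ z, r z * Complex.exp (Complex.I * ((inner ℝ y z : ℝ) : ℂ)))
    (Finvφ : SchwartzMap (EuclideanSpace ℝ (Fin n)) ℂ → EuclideanSpace ℝ (Fin n) → ℂ)
    (hFinvφ : ∀ φ x, Finvφ φ x = fourierConst n *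
      ∫ ξ, φ ξ * Complex.exp (Complex.I * ((inner ℝ x ξ : ℝ) : ℂ))) :
    ∀ φ : SchwartzMap (EuclideanSpace ℝ (Fin n)) ℂ,
      (∫ y : EuclideanSpace ℝ (Fin k),
          r y * Finvφ φ (∑ i : Fin k, y i • a (Fin.castLE hkn i))) =
        ∫ ξ : EuclideanSpace ℝ (Fin n),
          ((Real.rpow (2 * Real.pi) (-((n : ℝ) - (k : ℝ)) / 2)) : ℂ) *
            gt ((EuclideanSpace.equiv (Fin k) ℝ).symm
              (fun i : Fin k => inner ℝ (a (Fin.castLE hkn i)) ξ)) * φ ξ :=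
  inverse_fourier_of_subspace_distribution_general n k hkn a r gt hgt Finvφ hFinvφ
end

section
/- For n > 2 and any a ∈ R^n, ∫_{R^n} e^{−|x−a|^2/2} / |x|^2 dx ≤ ∫_{R^n} e^{−|x|^2/2} / |x|^2 dx. -/
/-!
Since `1 / ‖x‖² = ∫₀^∞ e^{-s‖x‖²} ds` for `x ≠ 0`, Tonelli turns both sides into integrals over
`s > 0` of Gaussian integrals. Completing the square,
`∫ e^{-‖x - a‖²/2 - s‖x‖²} dx = e^{-s‖a‖²/(1 + 2s)} (π / (1/2 + s))^{n/2}`,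
which is largest at `a = 0`; and for `n > 2` the value at `a = 0` is integrable in `s`, so the
right-hand side is finite.
-/

open MeasureTheory Real Set

theorem lintegral_exp_neg_mul_Ioi {r : ℝ} (hr : 0 < r) :
    ∫⁻ s in Ioi (0 : ℝ), ENNReal.ofReal (exp (-s * r)) = ENNReal.ofReal r⁻¹ := by
  have h_int := integral_exp_mul_Ioi (neg_lt_zero.2 hr) 0
  have h_integrable := integrableOn_exp_mul_Ioi (neg_lt_zero.2 hr) 0
  simp_rw [neg_mul, ← mul_neg, mul_comm _ (-r)]
  rw [← ofReal_integral_eq_lintegral_ofReal h_integrable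
    (.of_forall fun _ => (exp_pos _).le), h_int]
  simp

theorem lintegral_ofReal_div_norm_sq {E : Type*} [NormedAddCommGroup E] [MeasurableSpace E]
    [OpensMeasurableSpace E] {μ : Measure E} [SFinite μ] [NullSingletonClass μ] {f : E → ℝ}
    (hf : Measurable f) (hf0 : ∀ x, 0 ≤ f x) :
    ∫⁻ x, ENNReal.ofReal (f x / ‖x‖ ^ 2) ∂μ =
      ∫⁻ s in Ioi (0 : ℝ), ∫⁻ x, ENNReal.ofReal (f x * exp (-s * ‖x‖ ^ 2)) ∂μ := by
  rw [lintegral_lintegral_swap (by fun_prop)]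
  refine lintegral_congr_ae ((μ.ae_ne 0).mono fun x hx => ?_)
  simp_rw [ENNReal.ofReal_mul (hf0 x)]
  rw [lintegral_const_mul _ (by fun_prop), lintegral_exp_neg_mul_Ioi (by positivity),
    ← ENNReal.ofReal_mul (hf0 x), div_eq_mul_inv]

theorem integrableOn_div_add_rpow_Ioi {b c p : ℝ} (hb : 0 < b) (hc : 0 ≤ c) (hp : 1 < p) :
    IntegrableOn (fun s : ℝ => (c / (b + s)) ^ p) (Ioi 0) := by
  have h_shift : IntegrableOn (fun s : ℝ => c ^ p * (s + b) ^ (-p)) (Ioi 0) :=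
    (integrableOn_add_rpow_Ioi_of_lt (neg_lt_neg hp) (by linarith)).const_mul _
  refine h_shift.congr_fun (fun s hs => ?_) measurableSet_Ioi
  have hs : 0 < s + b := by linarith [mem_Ioi.1 hs]
  beta_reduce
  rw [add_comm b, div_rpow hc hs.le, rpow_neg hs.le, ← div_eq_mul_inv]

section InnerProductSpace

variable {V : Type*} [NormedAddCommGroup V] [InnerProductSpace ℝ V]

theorem norm_sub_sq_div_two_add_mul_norm_sq {s : ℝ} (hs : 0 ≤ s) (x a : V) :
    ‖x - a‖ ^ 2 / 2 + s * ‖x‖ ^ 2 =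
      (1 / 2 + s) * ‖x - (1 + 2 * s)⁻¹ • a‖ ^ 2 + s / (1 + 2 * s) * ‖a‖ ^ 2 := by
  have h : 1 + 2 * s ≠ 0 := by positivity
  simp only [norm_sub_sq_real, inner_smul_right, norm_smul, Real.norm_eq_abs,
    abs_inv, abs_of_pos (by positivity : 0 < 1 + 2 * s)]
  field_simp
  ring

variable [FiniteDimensional ℝ V] [MeasurableSpace V] [BorelSpace V]

theorem integral_exp_neg_norm_sub_sq_mul_exp {s : ℝ} (hs : 0 ≤ s) (a : V) :
    ∫ x, exp (-‖x - a‖ ^ 2 / 2) * exp (-s * ‖x‖ ^ 2) =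
      exp (-(s / (1 + 2 * s) * ‖a‖ ^ 2)) * (π / (1 / 2 + s)) ^ (Module.finrank ℝ V / 2 : ℝ) := by
  have h_square (x : V) : exp (-‖x - a‖ ^ 2 / 2) * exp (-s * ‖x‖ ^ 2) =
      exp (-(s / (1 + 2 * s) * ‖a‖ ^ 2)) * exp (-(1 / 2 + s) * ‖x - (1 + 2 * s)⁻¹ • a‖ ^ 2) := by
    rw [← exp_add, ← exp_add]
    congr 1
    linarith [norm_sub_sq_div_two_add_mul_norm_sq hs x a]
  simp_rw [h_square]
  rw [integral_const_mul, integral_sub_right_eq_self (fun x => exp (-(1 / 2 + s) * ‖x‖ ^ 2)),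
    GaussianFourier.integral_rexp_neg_mul_sq_norm (by positivity)]

theorem lintegral_exp_neg_norm_sub_sq_mul_exp {s : ℝ} (hs : 0 ≤ s) (a : V) :
    ∫⁻ x, ENNReal.ofReal (exp (-‖x - a‖ ^ 2 / 2) * exp (-s * ‖x‖ ^ 2)) =
      ENNReal.ofReal (exp (-(s / (1 + 2 * s) * ‖a‖ ^ 2)) *
        (π / (1 / 2 + s)) ^ (Module.finrank ℝ V / 2 : ℝ)) := by
  have h_int := integral_exp_neg_norm_sub_sq_mul_exp hs a
  rw [← h_int, ofReal_integral_eq_lintegral_ofReal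
    (.of_integral_ne_zero (by rw [h_int]; positivity)) (.of_forall fun _ => by positivity)]

theorem lintegral_exp_neg_norm_sub_sq_div_norm_sq [Nontrivial V] (a : V) :
    ∫⁻ x, ENNReal.ofReal (exp (-‖x - a‖ ^ 2 / 2) / ‖x‖ ^ 2) =
      ∫⁻ s in Ioi (0 : ℝ), ENNReal.ofReal (exp (-(s / (1 + 2 * s) * ‖a‖ ^ 2)) *
        (π / (1 / 2 + s)) ^ (Module.finrank ℝ V / 2 : ℝ)) := by
  rw [lintegral_ofReal_div_norm_sq (by fun_prop) fun _ => (exp_pos _).le]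
  exact setLIntegral_congr_fun measurableSet_Ioi fun s hs =>
    lintegral_exp_neg_norm_sub_sq_mul_exp (le_of_lt hs) a

theorem integral_exp_neg_norm_sub_sq_div_norm_sq_le (hV : 2 < Module.finrank ℝ V) (a : V) :
    ∫ x : V, exp (-‖x - a‖ ^ 2 / 2) / ‖x‖ ^ 2 ≤ ∫ x : V, exp (-‖x‖ ^ 2 / 2) / ‖x‖ ^ 2 := by
  have : Nontrivial V := Module.nontrivial_of_finrank_pos (R := ℝ) (by omega)
  have h_centered := lintegral_exp_neg_norm_sub_sq_div_norm_sq (0 : V)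
  simp only [sub_zero, norm_zero] at h_centered
  rw [integral_eq_lintegral_of_nonneg_ae (.of_forall fun _ => by positivity)
      (by fun_prop : Measurable _).aestronglyMeasurable,
    integral_eq_lintegral_of_nonneg_ae (.of_forall fun _ => by positivity)
      (by fun_prop : Measurable _).aestronglyMeasurable]
  refine ENNReal.toReal_mono ?_ ?_
  · have hp : 1 < (Module.finrank ℝ V / 2 : ℝ) := by
      rw [lt_div_iff₀ two_pos]
      exact_mod_cast hV
    rw [h_centered]
    simpa using (integrableOn_div_add_rpow_Ioi (by norm_num) pi_pos.le hp).lintegral_lt_top.ne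
  · rw [lintegral_exp_neg_norm_sub_sq_div_norm_sq a, h_centered]
    refine setLIntegral_mono' measurableSet_Ioi fun s (hs : 0 < s) => ENNReal.ofReal_le_ofReal ?_
    simpa using mul_le_of_le_one_left (by positivity)
      (exp_le_one_iff.2 (neg_nonpos.2 (by positivity)))

end InnerProductSpace

/-- Hardy–Littlewood rearrangement bound: for `n > 2` and any `a ∈ ℝⁿ`,
`∫ e^{−|x−a|²/2}/|x|² dx ≤ ∫ e^{−|x|²/2}/|x|² dx`. -/
theorem shifted_gaussian_over_sq_le (n : ℕ) (hn : 2 < n)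
    (a : EuclideanSpace ℝ (Fin n)) :
    (∫ x : EuclideanSpace ℝ (Fin n), Real.exp (-‖x - a‖ ^ 2 / 2) / ‖x‖ ^ 2) ≤
      ∫ x : EuclideanSpace ℝ (Fin n), Real.exp (-‖x‖ ^ 2 / 2) / ‖x‖ ^ 2 :=
  integral_exp_neg_norm_sub_sq_div_norm_sq_le (by simpa using hn) a
end
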